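/- arXiv:2010.13187 — 3 statements merged into one kernel-verified Lean document; each statement's English description precedes it below -/
import Mathlib

section
/- (Lower bound of Equation 3, the density-ratio form used by MS-GAN) In the MS-VAE graphical model, fix y ∈ 𝒴 and x ∈ 𝒳 and set p(x|y) = Σ_{z∈𝒵} pZ(z)·pX(x|y,z); assume p(x|y) > 0. Let qC be any pmf on 𝒞 such that qC(c) > 0 implies pC(c) > 0 and pY(y|c) > 0, and let qZ be any pmf on 𝒵 such that qZ(z) > 0 implies pZ(z) > 0 and pX(x|y,z) > 0. Then log p(y,x) ≥ −KL(qC‖pC) + Σ_{c∈𝒞} qC(c)·log pY(y|c) − KL(qZ‖pZ) + Σ_{z∈𝒵} qZ(z)·log(pX(x|y,z)/p(x|y)) + log p(x|y). -/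
/-- Gibbs'/Jensen ELBO inequality: `∑ q log (r/q) ≤ log ∑ r`. -/
lemma elbo_aux {α : Type*} [Fintype α] (q r : α → ℝ)
    (hq0 : ∀ a, 0 ≤ q a) (hq1 : ∑ a, q a = 1)
    (hr0 : ∀ a, 0 ≤ r a) (hsupp : ∀ a, 0 < q a → 0 < r a) :
    ∑ a, q a * Real.log (r a / q a) ≤ Real.log (∑ a, r a) := by
  obtain ⟨a0, ha0⟩ : ∃ a, 0 < q a := by
    by_contra h
    push_neg at h
    have : ∑ a, q a = 0 := Finset.sum_eq_zero fun a _ => le_antisymm (h a) (hq0 a)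
    rw [hq1] at this; norm_num at this
  set S : ℝ := ∑ a, r a with hS
  have hSpos : 0 < S := by
    have : 0 < r a0 := hsupp a0 ha0
    exact lt_of_lt_of_le this (Finset.single_le_sum (fun a _ => hr0 a) (Finset.mem_univ a0))
  have key : ∀ a, q a * Real.log (r a / q a) ≤ r a / S - q a + q a * Real.log S := by
    intro a
    rcases (hq0 a).lt_or_eq with hq | hq
    · have hr : 0 < r a := hsupp a hq
      have hlog : Real.log (r a / (q a * S)) ≤ r a / (q a * S) - 1 :=
        Real.log_le_sub_one_of_pos (by positivity)
      have heq : Real.log (r a / q a) = Real.log (r a / (q a * S)) + Real.log S := by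
        rw [Real.log_div hr.ne' (by positivity), Real.log_div hr.ne' (by positivity),
          Real.log_mul hq.ne' hSpos.ne']
        ring
      rw [heq]
      have := mul_le_mul_of_nonneg_left hlog (hq0 a)
      calc q a * (Real.log (r a / (q a * S)) + Real.log S)
          = q a * Real.log (r a / (q a * S)) + q a * Real.log S := by ring
        _ ≤ q a * (r a / (q a * S) - 1) + q a * Real.log S := by linarith
        _ = r a / S - q a + q a * Real.log S := by field_simp
    · rw [← hq]
      simpa using div_nonneg (hr0 a) hSpos.le
  calc ∑ a, q a * Real.log (r a / q a)
      ≤ ∑ a, (r a / S - q a + q a * Real.log S) :=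
        Finset.sum_le_sum fun a _ => key a
    _ = (∑ a, r a) / S - (∑ a, q a) + (∑ a, q a) * Real.log S := by
        rw [Finset.sum_add_distrib, Finset.sum_sub_distrib, ← Finset.sum_div,
          ← Finset.sum_mul]
    _ = Real.log S := by rw [hq1, ← hS, div_self hSpos.ne']; ring

/-- Pointwise rewriting: `-(q log(q/p)) + q log f = q log (p*f/q)`. -/
lemma elbo_pt (q p f : ℝ) (hq : 0 ≤ q) (h : 0 < q → 0 < p ∧ 0 < f) :
    -(q * Real.log (q / p)) + q * Real.log f = q * Real.log (p * f / q) := by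
  rcases hq.lt_or_eq with hq' | hq'
  · obtain ⟨hp, hf⟩ := h hq'
    rw [Real.log_div hq'.ne' hp.ne', Real.log_div (by positivity) hq'.ne',
      Real.log_mul hp.ne' hf.ne']
    ring
  · simp [← hq']

/-- (Lower bound of Equation 3, the density-ratio form used by MS-GAN) With
`p(x|y) = Σ_z pZ(z)·pX(x|y,z) > 0`,
`log p(y,x) ≥ −KL(qC‖pC) + Σ_c qC(c)·log pY(y|c) − KL(qZ‖pZ)
  + Σ_z qZ(z)·log(pX(x|y,z)/p(x|y)) + log p(x|y)`. -/
theorem msgan_elbo_density_ratio_form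
    {C Z Y X : Type*} [Fintype C] [Fintype Z] [Fintype Y] [Fintype X]
    (pC : C → ℝ) (pZ : Z → ℝ) (pY : C → Y → ℝ) (pX : Y → Z → X → ℝ)
    (hpC0 : ∀ c, 0 ≤ pC c) (hpC1 : ∑ c, pC c = 1)
    (hpZ0 : ∀ z, 0 ≤ pZ z) (hpZ1 : ∑ z, pZ z = 1)
    (hpY0 : ∀ c y, 0 ≤ pY c y) (hpY1 : ∀ c, ∑ y, pY c y = 1)
    (hpX0 : ∀ y z x, 0 ≤ pX y z x) (hpX1 : ∀ y z, ∑ x, pX y z x = 1)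
    (p : C → Z → Y → X → ℝ)
    (hp : ∀ c z y x, p c z y x = pC c * pZ z * pY c y * pX y z x)
    (y : Y) (x : X)
    (hpxy : 0 < (∑ z, pZ z * pX y z x))
    (qC : C → ℝ) (hqC0 : ∀ c, 0 ≤ qC c) (hqC1 : ∑ c, qC c = 1)
    (hqCsupp : ∀ c, 0 < qC c → 0 < pC c ∧ 0 < pY c y)
    (qZ : Z → ℝ) (hqZ0 : ∀ z, 0 ≤ qZ z) (hqZ1 : ∑ z, qZ z = 1)
    (hqZsupp : ∀ z, 0 < qZ z → 0 < pZ z ∧ 0 < pX y z x) :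
    Real.log (∑ c, ∑ z, p c z y x) ≥
      -(∑ c, qC c * Real.log (qC c / pC c)) + (∑ c, qC c * Real.log (pY c y))
      - (∑ z, qZ z * Real.log (qZ z / pZ z))
      + (∑ z, qZ z * Real.log (pX y z x / (∑ z', pZ z' * pX y z' x)))
      + Real.log (∑ z, pZ z * pX y z x) := by
  set S : ℝ := ∑ z, pZ z * pX y z x with hSdef
  set A : ℝ := ∑ c, pC c * pY c y with hAdef
  have hApos : 0 < A := by
    obtain ⟨c0, hc0⟩ : ∃ c, 0 < qC c := by
      by_contra h
      push_neg at h
      have : ∑ c, qC c = 0 := Finset.sum_eq_zero fun c _ => le_antisymm (h c) (hqC0 c)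
      rw [hqC1] at this; norm_num at this
    obtain ⟨h1, h2⟩ := hqCsupp c0 hc0
    exact lt_of_lt_of_le (by positivity)
      (Finset.single_le_sum (f := fun c => pC c * pY c y)
        (fun c _ => mul_nonneg (hpC0 c) (hpY0 c y)) (Finset.mem_univ c0))
  have hsum : ∑ c, ∑ z, p c z y x = A * S := by
    rw [hAdef, hSdef, Finset.sum_mul_sum]
    refine Finset.sum_congr rfl fun c _ => Finset.sum_congr rfl fun z _ => ?_
    rw [hp]; ring
  rw [hsum, Real.log_mul hApos.ne' hpxy.ne']
  -- C part
  have hC : -(∑ c, qC c * Real.log (qC c / pC c)) + (∑ c, qC c * Real.log (pY c y))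
      ≤ Real.log A := by
    have := elbo_aux qC (fun c => pC c * pY c y) hqC0 hqC1
      (fun c => mul_nonneg (hpC0 c) (hpY0 c y))
      (fun c hc => by obtain ⟨h1, h2⟩ := hqCsupp c hc; positivity)
    rw [← Finset.sum_neg_distrib, ← Finset.sum_add_distrib]
    calc ∑ c, (-(qC c * Real.log (qC c / pC c)) + qC c * Real.log (pY c y))
        = ∑ c, qC c * Real.log (pC c * pY c y / qC c) :=
          Finset.sum_congr rfl fun c _ => elbo_pt _ _ _ (hqC0 c) (hqCsupp c)
      _ ≤ Real.log A := this
  -- Z part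
  have hZ : -(∑ z, qZ z * Real.log (qZ z / pZ z))
      + (∑ z, qZ z * Real.log (pX y z x / S)) ≤ 0 := by
    have hr0 : ∀ z, 0 ≤ pZ z * pX y z x / S :=
      fun z => div_nonneg (mul_nonneg (hpZ0 z) (hpX0 y z x)) hpxy.le
    have hrsum : ∑ z, pZ z * pX y z x / S = 1 := by
      rw [← Finset.sum_div, ← hSdef, div_self hpxy.ne']
    have := elbo_aux qZ (fun z => pZ z * pX y z x / S) hqZ0 hqZ1 hr0
      (fun z hz => by obtain ⟨h1, h2⟩ := hqZsupp z hz; positivity)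
    rw [hrsum, Real.log_one] at this
    rw [← Finset.sum_neg_distrib, ← Finset.sum_add_distrib]
    calc ∑ z, (-(qZ z * Real.log (qZ z / pZ z)) + qZ z * Real.log (pX y z x / S))
        = ∑ z, qZ z * Real.log (pZ z * pX y z x / S / qZ z) := by
          refine Finset.sum_congr rfl fun z _ => ?_
          have h := elbo_pt (qZ z) (pZ z) (pX y z x / S) (hqZ0 z)
            (fun hz => by obtain ⟨h1, h2⟩ := hqZsupp z hz; exact ⟨h1, by positivity⟩)
          rw [h]
          have he : pZ z * (pX y z x / S) / qZ z = pZ z * pX y z x / S / qZ z := by ring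
          rw [he]
      _ ≤ 0 := this
  linarith
end

section
/- (Lower-bound term in the CGAN decomposition) With the data joint p(x,c), the generator model pθ(x,c) = pθ(x|c)·p(c), model marginal pθ(x), model posterior qθ(c|x) = pθ(x,c)/pθ(x), and generative mutual information I_θ(X;C) as defined, Σ_{x,c} pθ(x,c)·log(p(c|x)/p(c)) = I_θ(X;C) − Σ_x pθ(x)·KL(qθ(·|x)‖p(·|x)), where KL(qθ(·|x)‖p(·|x)) = Σ_c qθ(c|x)·log(qθ(c|x)/p(c|x)). In particular this expectation is a lower bound to I_θ(X;C). -/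
/-!
Since `pθ(x,c) = pθ(x)·qθ(c|x)`, the summand of `I_θ(X;C)`, `log (pθ(x,c) / (pθ(x) p(c)))`, differs
from `log (p(c|x) / p(c))` by exactly `log (qθ(c|x) / p(c|x))`; averaging over `pθ` turns that
difference into `Σ_x pθ(x)·KL(qθ(·|x)‖p(·|x))`, which is nonnegative by Gibbs' inequality.
-/

open Finset Real

theorem sub_le_mul_log_div {q p : ℝ} (hq : 0 ≤ q) (hp : 0 < p) : q - p ≤ q * log (q / p) := by
  rcases hq.eq_or_lt with rfl | hq
  · simpa using hp.le
  · have := one_sub_inv_le_log_of_pos (div_pos hq hp)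
    rw [inv_div] at this
    calc q - p = q * (1 - p / q) := by field_simp
      _ ≤ q * log (q / p) := mul_le_mul_of_nonneg_left this hq.le

theorem sum_mul_log_div_nonneg {C : Type*} [Fintype C] {q p : C → ℝ} (hq : ∀ c, 0 ≤ q c)
    (hp : ∀ c, 0 < p c) (hsum : ∑ c, p c ≤ ∑ c, q c) :
    0 ≤ ∑ c, q c * log (q c / p c) :=
  calc 0 ≤ ∑ c, (q c - p c) := by rw [sum_sub_distrib]; linarith
    _ ≤ ∑ c, q c * log (q c / p c) :=
      sum_le_sum fun c _ => sub_le_mul_log_div (hq c) (hp c)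

theorem mul_log_div_eq_sub_mul_log_div (j : ℝ) {m r s : ℝ} (hm : m ≠ 0) (hr : r ≠ 0)
    (hs : s ≠ 0) :
    j * log (r / s) = j * log (j / (m * s)) - m * (j / m * log (j / m / r)) := by
  rcases eq_or_ne j 0 with rfl | hj
  · simp
  rw [← mul_assoc, mul_div_cancel₀ _ hm, ← mul_sub, log_div hr hs, log_div hj (mul_ne_zero hm hs),
    log_div (div_ne_zero hj hm) hr, log_div hj hm, log_mul hm hs]
  ring

theorem sum_div_sum_eq_one {C : Type*} [Fintype C] (f : C → ℝ) (hf : ∑ c, f c ≠ 0) :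
    ∑ c, f c / ∑ c', f c' = 1 := by
  rw [← sum_div, div_self hf]

theorem cgan_lower_bound_term_general
    {X C : Type*} [Fintype X] [Fintype C]
    (p : X → C → ℝ) (hp0 : ∀ x c, 0 < p x c)
    (px : X → ℝ) (hpx : ∀ x, px x = ∑ c, p x c)
    (pc : C → ℝ) (hpc : ∀ c, pc c = ∑ x, p x c)
    (pcond : X → C → ℝ) (hpcond : ∀ x c, pcond x c = p x c / px x)
    (pθ : C → X → ℝ) (hpθ0 : ∀ c x, 0 < pθ c x)
    (pj : X → C → ℝ) (hpj : ∀ x c, pj x c = pθ c x * pc c)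
    (pm : X → ℝ) (hpm : ∀ x, pm x = ∑ c, pj x c)
    (q : X → C → ℝ) (hq : ∀ x c, q x c = pj x c / pm x)
    (I : ℝ) (hI : I = ∑ x, ∑ c, pj x c * Real.log (pj x c / (pm x * pc c))) :
    (∑ x, ∑ c, pj x c * Real.log (pcond x c / pc c)) =
      I - (∑ x, pm x * ∑ c, q x c * Real.log (q x c / pcond x c)) ∧
    (∑ x, ∑ c, pj x c * Real.log (pcond x c / pc c)) ≤ I := by
  have hpc0 (x : X) (c : C) : 0 < pc c :=
    hpc c ▸ sum_pos' (fun x _ => (hp0 x c).le) ⟨x, mem_univ x, hp0 x c⟩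
  have hpx0 (x : X) (c : C) : 0 < px x :=
    hpx x ▸ sum_pos' (fun c _ => (hp0 x c).le) ⟨c, mem_univ c, hp0 x c⟩
  have hpcond0 (x : X) (c : C) : 0 < pcond x c := hpcond x c ▸ div_pos (hp0 x c) (hpx0 x c)
  have hpj0 (x : X) (c : C) : 0 < pj x c := hpj x c ▸ mul_pos (hpθ0 c x) (hpc0 x c)
  have hpm0 (x : X) (c : C) : 0 < pm x :=
    hpm x ▸ sum_pos' (fun c _ => (hpj0 x c).le) ⟨c, mem_univ c, hpj0 x c⟩
  have hdecomp : (∑ x, ∑ c, pj x c * log (pcond x c / pc c)) =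
      I - ∑ x, pm x * ∑ c, q x c * log (q x c / pcond x c) := by
    rw [hI, ← sum_sub_distrib]
    refine sum_congr rfl fun x _ => ?_
    rw [mul_sum, ← sum_sub_distrib]
    refine sum_congr rfl fun c _ => ?_
    rw [hq]
    exact mul_log_div_eq_sub_mul_log_div _ (hpm0 x c).ne' (hpcond0 x c).ne' (hpc0 x c).ne'
  have hKL : 0 ≤ ∑ x, pm x * ∑ c, q x c * log (q x c / pcond x c) := by
    refine sum_nonneg fun x _ => ?_
    rcases isEmpty_or_nonempty C with _ | ⟨⟨c⟩⟩
    · simp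
    have hq1 : ∑ c, q x c = 1 := by
      simp only [hq, hpm]
      exact sum_div_sum_eq_one _ (hpm x ▸ (hpm0 x c).ne')
    have hpcond1 : ∑ c, pcond x c = 1 := by
      simp only [hpcond, hpx]
      exact sum_div_sum_eq_one _ (hpx x ▸ (hpx0 x c).ne')
    exact mul_nonneg (hpm0 x c).le <| sum_mul_log_div_nonneg
      (fun c => hq x c ▸ div_nonneg (hpj0 x c).le (hpm0 x c).le) (hpcond0 x) (by linarith)
  exact ⟨hdecomp, by linarith⟩

/-- (Lower-bound term in the CGAN decomposition)
`Σ_{x,c} pθ(x,c)·log(p(c|x)/p(c)) = I_θ(X;C) − Σ_x pθ(x)·KL(qθ(·|x)‖p(·|x))`; in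
particular it is a lower bound to `I_θ(X;C)`. -/
theorem cgan_lower_bound_term
    {X C : Type*} [Fintype X] [Fintype C]
    (p : X → C → ℝ) (hp0 : ∀ x c, 0 < p x c) (hp1 : ∑ x, ∑ c, p x c = 1)
    (px : X → ℝ) (hpx : ∀ x, px x = ∑ c, p x c)
    (pc : C → ℝ) (hpc : ∀ c, pc c = ∑ x, p x c)
    (pcond : X → C → ℝ) (hpcond : ∀ x c, pcond x c = p x c / px x)
    (pθ : C → X → ℝ) (hpθ0 : ∀ c x, 0 < pθ c x) (hpθ1 : ∀ c, ∑ x, pθ c x = 1)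
    (pj : X → C → ℝ) (hpj : ∀ x c, pj x c = pθ c x * pc c)
    (pm : X → ℝ) (hpm : ∀ x, pm x = ∑ c, pj x c)
    (q : X → C → ℝ) (hq : ∀ x c, q x c = pj x c / pm x)
    (I : ℝ) (hI : I = ∑ x, ∑ c, pj x c * Real.log (pj x c / (pm x * pc c))) :
    (∑ x, ∑ c, pj x c * Real.log (pcond x c / pc c)) =
      I - (∑ x, pm x * ∑ c, q x c * Real.log (q x c / pcond x c)) ∧
    (∑ x, ∑ c, pj x c * Real.log (pcond x c / pc c)) ≤ I :=
  cgan_lower_bound_term_general p hp0 px hpx pc hpc pcond hpcond pθ hpθ0 pj hpj pm hpm q hq I hI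
end

section
/- (Optimal discriminator logits are the log density ratio) Let A be a finite type and let p, q be pmfs on A with p(a) > 0 and q(a) > 0 for all a. For a function D : A → ℝ define the discriminator objective L(D) = Σ_a p(a)·log σ(D(a)) + Σ_a q(a)·log(1 − σ(D(a))), where σ(t) = 1/(1 + e^{−t}) is the logistic sigmoid. Then the function D*(a) = log(p(a)/q(a)) satisfies L(D) ≤ L(D*) for every D : A → ℝ, with equality if and only if D(a) = D*(a) for all a. -/
/-!
Pointwise in `a`, the objective is `p log s + q log (1 - s)` with `s = σ (D a) ∈ (0, 1)`. By
`log u ≤ u - 1`, with equality only at `u = 1`, this two-point cross entropy is maximised exactly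
at `s = p / (p + q)`, which is `σ (log (p / q))`. As `σ` is injective, the sum over `a` is
maximised exactly at `D = D*`.
-/

open Real

lemma sigmoid_log_div {p q : ℝ} (hp : 0 < p) (hq : 0 < q) :
    sigmoid (log (p / q)) = p / (p + q) := by
  rw [sigmoid_def, ← log_inv, inv_div, exp_log (by positivity)]
  field_simp

lemma mul_log_add_mul_log_one_sub_lt {P Q x : ℝ} (hP : 0 < P) (hQ : 0 < Q)
    (hx0 : 0 < x) (hx1 : x < 1) (hx : x ≠ P / (P + Q)) :
    P * log x + Q * log (1 - x) <
      P * log (P / (P + Q)) + Q * log (1 - P / (P + Q)) := by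
  set y := P / (P + Q) with hy
  have hy0 : 0 < y := by positivity
  have hcompl : 1 - y = Q / (P + Q) := by rw [hy]; field_simp; ring
  have hy1 : 0 < 1 - y := by rw [hcompl]; positivity
  have hlog_left : log (x / y) < x / y - 1 :=
    log_lt_sub_one_of_pos (by positivity) (mt (div_eq_one_iff_eq hy0.ne').1 hx)
  have hlog_right : log ((1 - x) / (1 - y)) ≤ (1 - x) / (1 - y) - 1 :=
    log_le_sub_one_of_pos (div_pos (by linarith) hy1)
  -- `P / y = Q / (1 - y) = P + Q`, so the linear bounds sum to zero.
  have hbalance : P * (x / y - 1) + Q * ((1 - x) / (1 - y) - 1) = 0 := by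
    rw [hcompl, hy]; field_simp; ring
  rw [log_div hx0.ne' hy0.ne'] at hlog_left
  rw [log_div (by linarith) hy1.ne'] at hlog_right
  linarith [mul_lt_mul_of_pos_left hlog_left hP, mul_le_mul_of_nonneg_left hlog_right hQ.le]

lemma mul_log_sigmoid_add_mul_log_one_sub_sigmoid_lt {P Q t : ℝ} (hP : 0 < P) (hQ : 0 < Q)
    (ht : t ≠ log (P / Q)) :
    P * log (sigmoid t) + Q * log (1 - sigmoid t) <
      P * log (sigmoid (log (P / Q))) + Q * log (1 - sigmoid (log (P / Q))) := by
  rw [sigmoid_log_div hP hQ]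
  refine mul_log_add_mul_log_one_sub_lt hP hQ (sigmoid_pos t) (sigmoid_lt_one t) ?_
  rwa [← sigmoid_log_div hP hQ, Ne, sigmoid_inj]

lemma mul_log_sigmoid_add_mul_log_one_sub_sigmoid_le {P Q : ℝ} (hP : 0 < P) (hQ : 0 < Q)
    (t : ℝ) :
    P * log (sigmoid t) + Q * log (1 - sigmoid t) ≤
      P * log (sigmoid (log (P / Q))) + Q * log (1 - sigmoid (log (P / Q))) := by
  rcases eq_or_ne t (log (P / Q)) with rfl | ht
  · exact le_rfl
  · exact (mul_log_sigmoid_add_mul_log_one_sub_sigmoid_lt hP hQ ht).le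

theorem optimal_discriminator_is_log_density_ratio_general
    {A : Type*} [Fintype A] (p q : A → ℝ)
    (hp0 : ∀ a, 0 < p a)
    (hq0 : ∀ a, 0 < q a)
    (sig : ℝ → ℝ) (hsig : ∀ t, sig t = 1 / (1 + Real.exp (-t)))
    (L : (A → ℝ) → ℝ)
    (hL : ∀ D, L D = (∑ a, p a * Real.log (sig (D a))) +
      ∑ a, q a * Real.log (1 - sig (D a)))
    (Dstar : A → ℝ) (hDstar : ∀ a, Dstar a = Real.log (p a / q a)) :
    ∀ D : A → ℝ, L D ≤ L Dstar ∧ (L D = L Dstar ↔ ∀ a, D a = Dstar a) := by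
  obtain rfl : sig = sigmoid := funext fun t => by rw [hsig, sigmoid_def, one_div]
  obtain rfl : Dstar = fun a => log (p a / q a) := funext hDstar
  have hL_sum : ∀ D, L D = ∑ a, (p a * log (sigmoid (D a)) + q a * log (1 - sigmoid (D a))) :=
    fun D => by rw [hL, Finset.sum_add_distrib]
  intro D
  have hle : ∀ a ∈ Finset.univ, p a * log (sigmoid (D a)) + q a * log (1 - sigmoid (D a)) ≤
      p a * log (sigmoid (log (p a / q a))) + q a * log (1 - sigmoid (log (p a / q a))) :=
    fun a _ => mul_log_sigmoid_add_mul_log_one_sub_sigmoid_le (hp0 a) (hq0 a) (D a)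
  rw [hL_sum, hL_sum, Finset.sum_eq_sum_iff_of_le hle]
  refine ⟨Finset.sum_le_sum hle, fun heq a => by_contra fun hne => ?_, fun h a _ => by rw [h a]⟩
  exact (mul_log_sigmoid_add_mul_log_one_sub_sigmoid_lt (hp0 a) (hq0 a) hne).ne
    (heq a (Finset.mem_univ a))

/-- (Optimal discriminator logits are the log density ratio) For pmfs `p, q` on a finite
type with full support, the discriminator objective
`L(D) = Σ_a p(a)·log σ(D(a)) + Σ_a q(a)·log(1 − σ(D(a)))` (with `σ` the logistic sigmoid)
is maximized exactly at `D*(a) = log(p(a)/q(a))`: `L(D) ≤ L(D*)` for every `D`, with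
equality iff `D = D*` pointwise. -/
theorem optimal_discriminator_is_log_density_ratio
    {A : Type*} [Fintype A] (p q : A → ℝ)
    (hp0 : ∀ a, 0 < p a) (hp1 : ∑ a, p a = 1)
    (hq0 : ∀ a, 0 < q a) (hq1 : ∑ a, q a = 1)
    (sig : ℝ → ℝ) (hsig : ∀ t, sig t = 1 / (1 + Real.exp (-t)))
    (L : (A → ℝ) → ℝ)
    (hL : ∀ D, L D = (∑ a, p a * Real.log (sig (D a))) +
      ∑ a, q a * Real.log (1 - sig (D a)))
    (Dstar : A → ℝ) (hDstar : ∀ a, Dstar a = Real.log (p a / q a)) :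
    ∀ D : A → ℝ, L D ≤ L Dstar ∧ (L D = L Dstar ↔ ∀ a, D a = Dstar a) :=
  optimal_discriminator_is_log_density_ratio_general p q hp0 hq0 sig hsig L hL Dstar hDstar
end
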